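/- Let N ≥ 1, S, T, t be integers with 1 ≤ t+1 ≤ S and t+1 ≤ T−S. For r ∈ {t, t+1} define the weight w_r(x) = 1/( x!·(r+N−1−x)!·(S+N−1−x)!·(T−r−S+x)! ) on 𝔛_r = {0,1,…,r+N−1}, the polynomials H_k^r(x) = Σ_{i=0}^{k} (−k)_i(−x)_i(k−2N−T+1)_i / ( (−S−N+1)_i(−r−N+1)_i i! ) for 0 ≤ k ≤ r+N−1, the orthonormal functions f_k^r(x) = H_k^r(x)·√(w_r(x)) / √( Σ_{u∈𝔛_r} w_r(u)·H_k^r(u)² ), and the coefficients c_k^t = √( (1 − k/(t+N))·(1 − k/(T+N−t−1)) ). Then for all x ∈ 𝔛_t and y ∈ 𝔛_{t+1}: Σ_{k=0}^{t+N−1} c_k^t · f_k^t(x) · f_k^{t+1}(y) = √( w_t(x)/w_{t+1}(y) ) · [ (S+N−1−x)·δ_{y, x+1} + (T−t−S+x)·δ_{y, x} ] / √( (t+N)(T+N−t−1) ). -/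

import Mathlib

open Finset

/-- The Pochhammer symbol `(a)_i = a(a+1)⋯(a+i−1)`, with `(a)_0 = 1`. -/
noncomputable def poch (a : ℝ) (i : ℕ) : ℝ := ∏ j ∈ Finset.range i, (a + j)

/-- The weight `w_r(x) = 1/( x!·(r+N−1−x)!·(S+N−1−x)!·(T−r−S+x)! )` of the Hahn
ensemble at time `r` (case (I) of the paper). -/
noncomputable def wgt (N S T r x : ℕ) : ℝ :=
  1 / ((Nat.factorial x : ℝ) * (Nat.factorial (r + N - 1 - x) : ℝ) *
    (Nat.factorial (S + N - 1 - x) : ℝ) * (Nat.factorial (T - r - S + x) : ℝ))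

/-- The (shifted) Hahn polynomial
`H_k^r(x) = Σ_{i=0}^{k} (−k)_i(−x)_i(k−2N−T+1)_i / ( (−S−N+1)_i(−r−N+1)_i i! )`. -/
noncomputable def hahnH (N S T r k x : ℕ) : ℝ :=
  ∑ i ∈ Finset.range (k + 1),
    poch (-(k : ℝ)) i * poch (-(x : ℝ)) i * poch ((k : ℝ) - 2 * N - T + 1) i /
      (poch (-(S : ℝ) - N + 1) i * poch (-(r : ℝ) - N + 1) i * (Nat.factorial i : ℝ))

/-- The orthonormalized Hahn function
`f_k^r(x) = H_k^r(x)·√(w_r(x)) / √( Σ_{u∈𝔛_r} w_r(u)·H_k^r(u)² )`,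
with `𝔛_r = {0,…,r+N−1}`. -/
noncomputable def fOrth (N S T r k x : ℕ) : ℝ :=
  hahnH N S T r k x * Real.sqrt (wgt N S T r x) /
    Real.sqrt (∑ u ∈ Finset.range (r + N), wgt N S T r u * (hahnH N S T r k u) ^ 2)

/-!
Put `s = S+N-1`, `m = t+N-1`, `c = T-t-S-1`: level `t` carries the Hahn data `(s, c+1, m)` and
level `t+1` the data `(s, c, m+1)`. Two contiguous relations link the levels:
`(m+1) H^{t+1}_k(y) = y H^t_k(y-1) + (m+1-y) H^t_k(y)` and
`(s-x) H^{t+1}_k(x+1) + (c+1+x) H^{t+1}_k(x) = γ_k H^t_k(x)`, `γ_k = (m+1-k)(s+c+1-k)/(m+1)`.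
Combined with the ratios of neighbouring weights, a summation by parts gives
`γ_l ⟨H^t_l, H^t_k⟩_t = (m+1) ⟨H^{t+1}_l, H^{t+1}_k⟩_{t+1}`. As the `γ_k` are distinct, this
yields the orthogonality of the `H^{t+1}_k`, and for `l = k` it turns `c_k f^t_k(x)` into
`√(w_t(x)) ((s-x) H^{t+1}_k(x+1) + (c+1+x) H^{t+1}_k(x)) / (√((m+1)(s+c+1)) ‖H^{t+1}_k‖)`.
Summing against `f^{t+1}_k(y)` (the missing term `k = t+N` vanishes as `γ_{t+N} = 0`), the claim
becomes the dual orthogonality of the orthonormal basis `f^{t+1}`.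
-/

theorem sum_mul_div_eq_ite_of_orthogonal {n : ℕ} {w : ℕ → ℝ} {P : ℕ → ℕ → ℝ}
    (hw : ∀ x < n, w x ≠ 0)
    (horth : ∀ k < n, ∀ l < n, k ≠ l → ∑ x ∈ range n, w x * P k x * P l x = 0)
    (hnorm : ∀ k < n, ∑ x ∈ range n, w x * P k x * P k x ≠ 0) {x y : ℕ} (hx : x < n)
    (hy : y < n) :
    ∑ k ∈ range n, P k x * P k y / ∑ u ∈ range n, w u * P k u * P k u
      = if x = y then 1 / w y else 0 := by
  set g := fun k => ∑ u ∈ range n, w u * P k u * P k u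
  let A : Matrix (Fin n) (Fin n) ℝ := Matrix.of fun k u => P k u
  let B : Matrix (Fin n) (Fin n) ℝ := Matrix.of fun u l => w u * P l u / g l
  have hAB : A * B = 1 := by
    ext k l
    rw [Matrix.mul_apply, Matrix.one_apply]
    simp only [A, B, Matrix.of_apply]
    rw [Fin.sum_univ_eq_sum_range (fun u => P k u * (w u * P l u / g l))]
    simp_rw [mul_div_assoc', ← sum_div, mul_left_comm (P k _), ← mul_assoc]
    by_cases hkl : k = l
    · subst hkl
      rw [if_pos rfl]
      exact div_self (hnorm k k.isLt)
    · rw [if_neg hkl, horth k k.isLt l l.isLt (Fin.val_ne_of_ne hkl), zero_div]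
  have hBA : (B * A) ⟨x, hx⟩ ⟨y, hy⟩ = (1 : Matrix (Fin n) (Fin n) ℝ) ⟨x, hx⟩ ⟨y, hy⟩ := by
    rw [mul_eq_one_comm.mp hAB]
  rw [Matrix.mul_apply, Matrix.one_apply] at hBA
  simp only [A, B, Matrix.of_apply, Fin.mk.injEq] at hBA
  rw [Fin.sum_univ_eq_sum_range (fun k => w x * P k x / g k * P k y)] at hBA
  simp_rw [mul_div_assoc, mul_assoc, ← mul_sum] at hBA
  have hsum : ∑ k ∈ range n, P k x * P k y / g k = ∑ k ∈ range n, P k x / g k * P k y :=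
    sum_congr rfl fun _ _ => div_mul_eq_mul_div _ _ _ |>.symm
  rw [hsum]
  split_ifs at hBA ⊢ with hxy
  · subst hxy
    rw [eq_div_iff (hw x hx), mul_comm, hBA]
  · exact (mul_eq_zero.mp hBA).resolve_left (hw x hx)

lemma poch_zero (a : ℝ) : poch a 0 = 1 := by simp [poch]

lemma poch_succ (a : ℝ) (i : ℕ) : poch a (i + 1) = poch a i * (a + i) := by
  simp [poch, prod_range_succ]

lemma poch_succ' (a : ℝ) (i : ℕ) : poch a (i + 1) = a * poch (a + 1) i := by
  simp only [poch, prod_range_succ', Nat.cast_succ, Nat.cast_zero, add_zero]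
  rw [mul_comm]
  congr 1
  exact prod_congr rfl fun j _ => by ring

lemma poch_neg_natCast_eq_zero {x i : ℕ} (h : x < i) : poch (-(x : ℝ)) i = 0 :=
  prod_eq_zero (mem_range.mpr h) (by simp)

lemma poch_neg_natCast_ne_zero {m i : ℕ} (h : i ≤ m) : poch (-(m : ℝ)) i ≠ 0 := by
  refine prod_ne_zero_iff.mpr fun j hj => ?_
  have : (j : ℝ) < m := by exact_mod_cast (mem_range.mp hj).trans_le h
  linarith

lemma poch_neg_add_one_mul (a : ℝ) (i : ℕ) :
    poch (-(a + 1)) i * (a + 1 - i) = (a + 1) * poch (-a) i := by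
  have h := (poch_succ (-(a + 1)) i).symm.trans (poch_succ' _ i)
  rw [show -(a + 1) + 1 = -a by ring] at h
  linear_combination -h

lemma poch_neg_contiguous_up (n y : ℝ) (i : ℕ) :
    y * poch (-y + 1) i + (n - y) * poch (-y) i = (n - i) * poch (-y) i := by
  cases i with
  | zero => simp [poch_zero]
  | succ i =>
    rw [poch_succ (-y + 1), poch_succ' (-y)]
    push_cast
    ring

lemma poch_neg_contiguous_down (a b x : ℝ) (i : ℕ) :
    (a - x) * poch (-x - 1) i + (b + x) * poch (-x) i
      = (a + b - i) * poch (-x) i + i * (i - 1 - a) * poch (-x) (i - 1) := by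
  cases i with
  | zero => simp [poch_zero]
  | succ i =>
    rw [poch_succ' (-x - 1), poch_succ (-x), show -x - 1 + 1 = -x by ring]
    push_cast
    ring

noncomputable def hahnCoeff (s c m k i : ℕ) : ℝ :=
  poch (-(k : ℝ)) i * poch ((k : ℝ) - s - c - m - 1) i /
    (poch (-(s : ℝ)) i * poch (-(m : ℝ)) i * i.factorial)

noncomputable def hahnPoly (s c m k : ℕ) (x : ℝ) : ℝ :=
  ∑ i ∈ range (k + 1), hahnCoeff s c m k i * poch (-x) i

noncomputable def hahnGamma (s c m k : ℕ) : ℝ :=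
  ((m : ℝ) + 1 - k) * ((s : ℝ) + c + 1 - k) / ((m : ℝ) + 1)

lemma hahnPoly_zero (s c m k : ℕ) : hahnPoly s c m k 0 = 1 := by
  rw [hahnPoly, sum_eq_single 0 (fun i _ hi => ?_) (by simp)]
  · simp [hahnCoeff, poch_zero]
  · simpa using mul_eq_zero_of_right _ (poch_neg_natCast_eq_zero (Nat.pos_of_ne_zero hi))

lemma hahnCoeff_succ_self (s c m k : ℕ) : hahnCoeff s c m k (k + 1) = 0 := by
  simp [hahnCoeff, poch_neg_natCast_eq_zero (Nat.lt_succ_self k)]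

lemma hahnCoeff_level_succ (s c m k : ℕ) {i : ℕ} (hi : i ≤ m) :
    hahnCoeff s (c + 1) m k i * ((m : ℝ) + 1 - i)
      = ((m : ℝ) + 1) * hahnCoeff s c (m + 1) k i := by
  have hW : poch (-(m : ℝ)) i ≠ 0 := poch_neg_natCast_ne_zero hi
  have hV : poch (-((m : ℝ) + 1)) i ≠ 0 := by
    exact_mod_cast poch_neg_natCast_ne_zero (show i ≤ m + 1 by omega)
  have hfac : (i.factorial : ℝ) ≠ 0 := by positivity
  have hb : ((k : ℝ) - s - ↑(c + 1) - m - 1) = (k : ℝ) - s - c - ↑(m + 1) - 1 := by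
    push_cast; ring
  simp only [hahnCoeff, hb]
  push_cast
  by_cases hU : poch (-(s : ℝ)) i = 0
  · simp [hU]
  rw [div_mul_eq_mul_div, mul_div_assoc', div_eq_div_iff (mul_ne_zero (mul_ne_zero hU hW) hfac)
    (mul_ne_zero (mul_ne_zero hU hV) hfac)]
  linear_combination (poch (-(k : ℝ)) i * poch ((k : ℝ) - s - c - (m + 1) - 1) i *
    poch (-(s : ℝ)) i * i.factorial) * poch_neg_add_one_mul (m : ℝ) i

lemma hahnPoly_level_succ (s c : ℕ) {m k : ℕ} (hk : k ≤ m) (x : ℝ) :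
    x * hahnPoly s (c + 1) m k (x - 1) + ((m : ℝ) + 1 - x) * hahnPoly s (c + 1) m k x
      = ((m : ℝ) + 1) * hahnPoly s c (m + 1) k x := by
  simp only [hahnPoly, mul_sum, ← sum_add_distrib]
  refine sum_congr rfl fun i hi => ?_
  have hcoeff := hahnCoeff_level_succ s c m k (i := i) (by grind)
  rw [neg_sub, ← neg_add_eq_sub]
  linear_combination hahnCoeff s (c + 1) m k i * poch_neg_contiguous_up ((m : ℝ) + 1) x i
    + poch (-x) i * hcoeff

lemma hahnCoeff_level_pred (s c m k : ℕ) {j : ℕ} (hjm : j ≤ m) (hjs : j < s) :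
    hahnCoeff s c (m + 1) k j * ((s : ℝ) + c + 1 - j)
      + hahnCoeff s c (m + 1) k (j + 1) * (((j : ℝ) + 1) * (j - s))
      = hahnGamma s c m k * hahnCoeff s (c + 1) m k j := by
  have hU : poch (-(s : ℝ)) j ≠ 0 := poch_neg_natCast_ne_zero hjs.le
  have hV : poch (-((m : ℝ) + 1)) j ≠ 0 := by
    exact_mod_cast poch_neg_natCast_ne_zero (show j ≤ m + 1 by omega)
  have hW : poch (-(m : ℝ)) j ≠ 0 := poch_neg_natCast_ne_zero hjm
  have hsj : -(s : ℝ) + j ≠ 0 := by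
    have : (j : ℝ) < s := by exact_mod_cast hjs
    linarith
  have hmj : -((m : ℝ) + 1) + j ≠ 0 := by
    have : (j : ℝ) ≤ m := by exact_mod_cast hjm
    linarith
  have hb : ((k : ℝ) - s - ↑(c + 1) - m - 1) = (k : ℝ) - s - c - ↑(m + 1) - 1 := by
    push_cast; ring
  simp only [hahnCoeff, hahnGamma, hb, poch_succ, Nat.factorial_succ]
  push_cast
  field_simp
  linear_combination (poch (-(k : ℝ)) j * poch ((k : ℝ) - s - c - (m + 1) - 1) j *
    (-(s : ℝ) + j) * ((m : ℝ) + 1 - k) * ((s : ℝ) + c + 1 - k)) *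
    poch_neg_add_one_mul (m : ℝ) j

lemma hahnPoly_level_pred (s c m k : ℕ) {x : ℕ} (hxm : x ≤ m) (hxs : x < s) :
    ((s : ℝ) - x) * hahnPoly s c (m + 1) k ((x : ℝ) + 1)
        + ((c : ℝ) + 1 + x) * hahnPoly s c (m + 1) k x
      = hahnGamma s c m k * hahnPoly s (c + 1) m k x := by
  set g := hahnCoeff s c (m + 1) k
  have hsplit : ∀ i ∈ range (k + 1),
      ((s : ℝ) - x) * (g i * poch (-((x : ℝ) + 1)) i)
          + ((c : ℝ) + 1 + x) * (g i * poch (-x) i)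
        = g i * ((s + c + 1 - i) * poch (-x) i) + g i * (i * (i - 1 - s) * poch (-x) (i - 1)) := by
    intro i _
    rw [neg_add']
    linear_combination g i * poch_neg_contiguous_down s (c + 1) x i
  have hshift : ∑ i ∈ range (k + 1), g i * (i * (i - 1 - s) * poch (-(x : ℝ)) (i - 1))
      = ∑ j ∈ range (k + 1), g (j + 1) * ((j + 1) * (j - s) * poch (-(x : ℝ)) j) := by
    rw [sum_range_succ', sum_range_succ _ k,
      show g (k + 1) = 0 from hahnCoeff_succ_self s c (m + 1) k]
    simp only [Nat.cast_zero, zero_mul, mul_zero, add_zero, Nat.add_sub_cancel, Nat.cast_succ]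
    exact sum_congr rfl fun j _ => by ring
  simp only [hahnPoly, mul_sum, ← sum_add_distrib]
  rw [sum_congr rfl hsplit, sum_add_distrib, hshift, ← sum_add_distrib]
  refine sum_congr rfl fun j _ => ?_
  rcases lt_or_ge x j with hxj | hjx
  · simp [poch_neg_natCast_eq_zero hxj]
  · linear_combination
      poch (-(x : ℝ)) j * hahnCoeff_level_pred s c m k (hjx.trans hxm) (hjx.trans_lt hxs)

noncomputable def hahnWeight (s c m x : ℕ) : ℝ :=
  1 / ((x.factorial : ℝ) * ((m - x).factorial : ℝ) * ((s - x).factorial : ℝ) *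
    ((c + x).factorial : ℝ))

lemma hahnWeight_pos (s c m x : ℕ) : 0 < hahnWeight s c m x := by
  unfold hahnWeight
  positivity

lemma hahnWeight_mul_sub {s : ℕ} (c m : ℕ) {x : ℕ} (hxs : x < s) :
    hahnWeight s (c + 1) m x * ((s : ℝ) - x)
      = ((x : ℝ) + 1) * hahnWeight s c (m + 1) (x + 1) := by
  obtain ⟨d, rfl⟩ : ∃ d, s = x + d + 1 := ⟨s - x - 1, by omega⟩
  rw [hahnWeight, hahnWeight, show x + d + 1 - x = d + 1 by omega,
    show x + d + 1 - (x + 1) = d by omega, show m + 1 - (x + 1) = m - x by omega,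
    show c + (x + 1) = c + 1 + x by omega]
  simp only [Nat.factorial_succ]
  push_cast
  field_simp
  ring

lemma hahnWeight_mul_add (s c : ℕ) {m x : ℕ} (hxm : x ≤ m) :
    hahnWeight s (c + 1) m x * ((c : ℝ) + 1 + x)
      = ((m : ℝ) + 1 - x) * hahnWeight s c (m + 1) x := by
  obtain ⟨d, rfl⟩ : ∃ d, m = x + d := ⟨m - x, by omega⟩
  rw [hahnWeight, hahnWeight, show x + d - x = d by omega, show x + d + 1 - x = d + 1 by omega,
    show c + 1 + x = c + x + 1 by omega]
  simp only [Nat.factorial_succ]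
  push_cast
  field_simp
  ring

noncomputable def hahnGram (s c m k l : ℕ) : ℝ :=
  ∑ x ∈ range (m + 1), hahnWeight s c m x * hahnPoly s c m k x * hahnPoly s c m l x

lemma hahnGram_comm (s c m k l : ℕ) : hahnGram s c m k l = hahnGram s c m l k :=
  sum_congr rfl fun _ _ => by ring

lemma hahnGram_self_pos (s c m k : ℕ) : 0 < hahnGram s c m k k := by
  refine sum_pos' (fun x _ => ?_) ⟨0, by simp, ?_⟩
  · rw [mul_assoc]
    exact mul_nonneg (hahnWeight_pos s c m x).le (mul_self_nonneg _)
  · simpa [hahnPoly_zero] using hahnWeight_pos s c m 0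

lemma hahnGamma_mul_hahnGram {s m : ℕ} (c l : ℕ) {k : ℕ} (hk : k ≤ m) (hms : m < s) :
    hahnGamma s c m l * hahnGram s (c + 1) m l k = ((m : ℝ) + 1) * hahnGram s c (m + 1) l k := by
  set p := hahnPoly s (c + 1) m k
  set q := hahnPoly s c (m + 1) l
  set w := hahnWeight s c (m + 1)
  have hstep : ∀ x ∈ range (m + 1),
      hahnGamma s c m l * (hahnWeight s (c + 1) m x * hahnPoly s (c + 1) m l x * p x)
        = ((x + 1 : ℕ) : ℝ) * w (x + 1) * q ((x + 1 : ℕ) : ℝ) * p ((x + 1 : ℕ) - 1 : ℝ)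
          + ((m : ℝ) + 1 - x) * w x * q x * p x := by
    intro x hx
    have hxm : x ≤ m := Nat.lt_succ_iff.mp (mem_range.mp hx)
    push_cast
    rw [add_sub_cancel_right]
    linear_combination
      -(hahnWeight s (c + 1) m x * p x) * hahnPoly_level_pred s c m l hxm (by omega)
      + q ((x : ℝ) + 1) * p x * hahnWeight_mul_sub c m (show x < s by omega)
      + q x * p x * hahnWeight_mul_add s c hxm
  have hshift : ∑ x ∈ range (m + 1),
        ((x + 1 : ℕ) : ℝ) * w (x + 1) * q ((x + 1 : ℕ) : ℝ) * p ((x + 1 : ℕ) - 1 : ℝ)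
      = ∑ y ∈ range (m + 2), (y : ℝ) * w y * q y * p ((y : ℝ) - 1) := by
    rw [sum_range_succ' _ (m + 1)]
    simp
  have hextend : ∑ x ∈ range (m + 1), ((m : ℝ) + 1 - x) * w x * q x * p x
      = ∑ y ∈ range (m + 2), ((m : ℝ) + 1 - y) * w y * q y * p y := by
    rw [sum_range_succ _ (m + 1)]
    simp
  rw [hahnGram, hahnGram, mul_sum, mul_sum, sum_congr rfl hstep, sum_add_distrib, hshift, hextend,
    ← sum_add_distrib]
  refine sum_congr rfl fun y _ => ?_
  linear_combination w y * q y * hahnPoly_level_succ s c hk (y : ℝ)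

lemma hahnGamma_succ_self (s c m : ℕ) : hahnGamma s c m (m + 1) = 0 := by
  simp [hahnGamma]

lemma hahnGamma_pos {s m : ℕ} (c : ℕ) {k : ℕ} (hk : k ≤ m) (hms : m < s) :
    0 < hahnGamma s c m k := by
  have hkm : (k : ℝ) ≤ m := by exact_mod_cast hk
  have hks : (k : ℝ) < s := by exact_mod_cast hk.trans_lt hms
  unfold hahnGamma
  apply div_pos (mul_pos _ _) <;> linarith [(c.cast_nonneg : (0 : ℝ) ≤ c)]

lemma hahnGamma_ne {s c m k l : ℕ} (hk : k ≤ m) (hl : l ≤ m) (hm : m ≤ s + c + 1)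
    (hkl : k ≠ l) :
    hahnGamma s c m k ≠ hahnGamma s c m l := by
  have hsum : (k : ℝ) + l < m + s + c + 2 := by exact_mod_cast (by omega : k + l < m + s + c + 2)
  have hkl' : (k : ℝ) - l ≠ 0 := sub_ne_zero.mpr (by exact_mod_cast hkl)
  have hdiff : hahnGamma s c m l - hahnGamma s c m k
      = ((k : ℝ) - l) * (m + s + c + 2 - k - l) / (m + 1) := by
    unfold hahnGamma
    ring
  intro h
  rw [h, sub_self, eq_comm, div_eq_zero_iff] at hdiff
  rcases hdiff with h0 | h0
  · exact mul_ne_zero hkl' (by linarith) h0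
  · linarith

lemma hahnGram_eq_zero {s m : ℕ} (c : ℕ) {k l : ℕ} (hk : k ≤ m + 1) (hl : l ≤ m + 1)
    (hkl : k ≠ l) (hms : m < s) : hahnGram s c (m + 1) k l = 0 := by
  have hm : (m : ℝ) + 1 ≠ 0 := by positivity
  suffices key : ∀ {i j}, i ≤ m → j ≤ m + 1 → i ≠ j → hahnGram s c (m + 1) j i = 0 by
    rcases Nat.lt_or_ge k (m + 1) with hk' | hk'
    · exact hahnGram_comm s c _ k l ▸ key (by omega) hl hkl
    · exact key (by omega) hk (Ne.symm hkl)
  intro i j hi hj hij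
  have hji := hahnGamma_mul_hahnGram c j hi hms
  rcases Nat.lt_or_ge j (m + 1) with hj' | hj'
  · have hγ := hahnGamma_ne (s := s) (c := c) hi (Nat.lt_succ_iff.mp hj') (by omega) hij
    have hij' := hahnGamma_mul_hahnGram c i (Nat.lt_succ_iff.mp hj') hms
    rw [hahnGram_comm s c (m + 1) i, hahnGram_comm s (c + 1) m i] at hij'
    have h0 : hahnGram s (c + 1) m j i = 0 := by
      refine (mul_eq_zero.mp ?_).resolve_left (sub_ne_zero.mpr hγ)
      linear_combination hij' - hji
    simpa [h0, hm] using hji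
  · obtain rfl : j = m + 1 := by omega
    rw [hahnGamma_succ_self, zero_mul, eq_comm] at hji
    simpa [hm] using hji

lemma sum_hahnPoly_mul_div_hahnGram {s m : ℕ} (c : ℕ) {x y : ℕ} (hx : x ≤ m + 1)
    (hy : y ≤ m + 1) (hms : m < s) :
    ∑ k ∈ range (m + 2),
        hahnPoly s c (m + 1) k x * hahnPoly s c (m + 1) k y / hahnGram s c (m + 1) k k
      = if x = y then 1 / hahnWeight s c (m + 1) y else 0 :=
  sum_mul_div_eq_ite_of_orthogonal (P := fun k x => hahnPoly s c (m + 1) k x)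
    (fun x _ => (hahnWeight_pos s c (m + 1) x).ne')
    (fun k hk l hl hkl => hahnGram_eq_zero c (by omega) (by omega) hkl hms)
    (fun k _ => (hahnGram_self_pos s c (m + 1) k).ne') (by omega) (by omega)

noncomputable def hahnOrth (s c m k x : ℕ) : ℝ :=
  hahnPoly s c m k x * √(hahnWeight s c m x) / √(hahnGram s c m k k)

lemma sqrt_mul_hahnOrth {s m : ℕ} (c : ℕ) {k x : ℕ} (hk : k ≤ m) (hxm : x ≤ m)
    (hms : m < s) :
    √((1 - (k : ℝ) / (m + 1)) * (1 - (k : ℝ) / (s + c + 1))) * hahnOrth s (c + 1) m k x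
      = √(hahnWeight s (c + 1) m x)
          * (((s : ℝ) - x) * hahnPoly s c (m + 1) k ((x : ℝ) + 1)
            + ((c : ℝ) + 1 + x) * hahnPoly s c (m + 1) k x)
          / (√(((m : ℝ) + 1) * (s + c + 1)) * √(hahnGram s c (m + 1) k k)) := by
  have hγ := hahnGamma_pos c hk hms
  have hG := hahnGram_self_pos s (c + 1) m k
  have hG' := hahnGram_self_pos s c (m + 1) k
  have hm : (0 : ℝ) < m + 1 := by positivity
  have hsc : (0 : ℝ) < s + c + 1 := by positivity
  have hcoeff : (1 - (k : ℝ) / (m + 1)) * (1 - (k : ℝ) / (s + c + 1))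
      = hahnGamma s c m k / (s + c + 1) := by
    unfold hahnGamma
    field_simp
  -- squaring, this is `hahnGamma_mul_hahnGram` with `l = k`
  have hsqrt : √(hahnGamma s c m k / (s + c + 1)) * √(((m : ℝ) + 1) * (s + c + 1))
      * √(hahnGram s c (m + 1) k k) = hahnGamma s c m k * √(hahnGram s (c + 1) m k k) := by
    rw [← Real.sqrt_mul (by positivity), ← Real.sqrt_mul (by positivity),
      show hahnGamma s c m k / (s + c + 1) * ((m + 1) * (s + c + 1)) * hahnGram s c (m + 1) k k
        = hahnGamma s c m k ^ 2 * hahnGram s (c + 1) m k k by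
        field_simp
        linear_combination -hahnGamma_mul_hahnGram c k hk hms,
      Real.sqrt_mul (sq_nonneg _), Real.sqrt_sq hγ.le]
  rw [hcoeff, hahnOrth, hahnPoly_level_pred s c m k hxm (by omega), mul_div_assoc',
    div_eq_div_iff (by positivity) (by positivity)]
  linear_combination hahnPoly s (c + 1) m k x * √(hahnWeight s (c + 1) m x) * hsqrt

theorem sum_sqrt_mul_hahnOrth_mul_hahnOrth {s m : ℕ} (c : ℕ) {x y : ℕ} (hx : x ≤ m)
    (hy : y ≤ m + 1) (hms : m < s) :
    ∑ k ∈ range (m + 1),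
        √((1 - (k : ℝ) / (m + 1)) * (1 - (k : ℝ) / (s + c + 1))) * hahnOrth s (c + 1) m k x
          * hahnOrth s c (m + 1) k y
      = √(hahnWeight s (c + 1) m x / hahnWeight s c (m + 1) y) *
          (((s : ℝ) - x) * (if y = x + 1 then 1 else 0)
            + ((c : ℝ) + 1 + x) * (if y = x then 1 else 0)) /
          √(((m : ℝ) + 1) * (s + c + 1)) := by
  set p := hahnPoly s c (m + 1)
  set G := hahnGram s c (m + 1)
  set w := hahnWeight s c (m + 1) y
  set K := √(hahnWeight s (c + 1) m x) * √w / √(((m : ℝ) + 1) * (s + c + 1))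
  set F := fun k =>
    (((s : ℝ) - x) * p k ((x : ℝ) + 1) + ((c : ℝ) + 1 + x) * p k x) * p k y / G k k
  have hterm : ∀ k ∈ range (m + 1),
      √((1 - (k : ℝ) / (m + 1)) * (1 - (k : ℝ) / (s + c + 1))) * hahnOrth s (c + 1) m k x
        * hahnOrth s c (m + 1) k y = K * F k := by
    intro k hk
    rw [sqrt_mul_hahnOrth c (Nat.lt_succ_iff.mp (mem_range.mp hk)) hx hms, hahnOrth]
    simp only [K, F, p, G, w]
    field_simp
    rw [Real.sq_sqrt (hahnGram_self_pos s c (m + 1) k).le]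
  have hlast : F (m + 1) = 0 := by
    simp only [F, p, hahnPoly_level_pred s c m (m + 1) hx (by omega), hahnGamma_succ_self]
    ring
  have hF : ∑ k ∈ range (m + 2), F k
      = (((s : ℝ) - x) * (if y = x + 1 then 1 else 0)
          + ((c : ℝ) + 1 + x) * (if y = x then 1 else 0)) / w := by
    have hsucc := sum_hahnPoly_mul_div_hahnGram c (x := x + 1) (by omega) hy hms
    have hself := sum_hahnPoly_mul_div_hahnGram c (x := x) (by omega) hy hms
    push_cast at hsucc
    rw [show ∑ k ∈ range (m + 2), F k
        = ((s : ℝ) - x) * ∑ k ∈ range (m + 2), p k ((x : ℝ) + 1) * p k y / G k k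
          + ((c : ℝ) + 1 + x) * ∑ k ∈ range (m + 2), p k x * p k y / G k k by
      rw [mul_sum, mul_sum, ← sum_add_distrib]
      exact sum_congr rfl fun k _ => by ring, hsucc, hself]
    simp only [eq_comm (a := y)]
    split_ifs <;> ring
  rw [show m + 2 = m + 1 + 1 from rfl, sum_range_succ, hlast, add_zero] at hF
  have hw : 0 < w := hahnWeight_pos s c (m + 1) y
  rw [sum_congr rfl hterm, ← mul_sum, hF, Real.sqrt_div' _ hw.le]
  simp only [K]
  field_simp
  rw [Real.sq_sqrt hw.le]
  ring

lemma hahnH_eq_hahnPoly {N : ℕ} (S T r k x : ℕ) (hN : 1 ≤ N) (hT : r + S ≤ T) :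
    hahnH N S T r k x = hahnPoly (S + N - 1) (T - r - S) (r + N - 1) k x := by
  have hs : ((S + N - 1 : ℕ) : ℝ) = S + N - 1 := by
    rw [Nat.cast_sub (by omega)]; push_cast; ring
  have hm : ((r + N - 1 : ℕ) : ℝ) = r + N - 1 := by
    rw [Nat.cast_sub (by omega)]; push_cast; ring
  have hc : ((T - r - S : ℕ) : ℝ) = T - r - S := by
    rw [Nat.cast_sub (by omega), Nat.cast_sub (by omega)]
  refine sum_congr rfl fun i _ => ?_
  rw [hahnCoeff, hs, hm, hc]
  ring_nf

lemma wgt_eq_hahnWeight (N S T r x : ℕ) :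
    wgt N S T r x = hahnWeight (S + N - 1) (T - r - S) (r + N - 1) x := rfl

lemma fOrth_eq_hahnOrth {N : ℕ} (S T r k x : ℕ) (hN : 1 ≤ N) (hT : r + S ≤ T) :
    fOrth N S T r k x = hahnOrth (S + N - 1) (T - r - S) (r + N - 1) k x := by
  rw [fOrth, hahnOrth, hahnGram, Nat.sub_add_cancel (by omega : 1 ≤ r + N)]
  simp only [hahnH_eq_hahnPoly S T r _ _ hN hT, wgt_eq_hahnWeight, sq, mul_assoc]

/-- Lemma 6 of the paper: the explicit two-diagonal form of
`Σ_k c_k^t f_k^t(x) f_k^{t+1}(y)`. -/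
theorem stmt_9 (N S T t : ℕ) (hN : 1 ≤ N) (htS : t + 1 ≤ S) (htT : t + 1 + S ≤ T) :
    ∀ x y : ℕ, x ≤ t + N - 1 → y ≤ t + N →
      ∑ k ∈ Finset.range (t + N),
        Real.sqrt ((1 - (k : ℝ) / ((t : ℝ) + N)) * (1 - (k : ℝ) / ((T : ℝ) + N - t - 1)))
          * fOrth N S T t k x * fOrth N S T (t + 1) k y
      = Real.sqrt (wgt N S T t x / wgt N S T (t + 1) y) *
          (((S : ℝ) + N - 1 - x) * (if y = x + 1 then 1 else 0) +
            ((T : ℝ) - t - S + x) * (if y = x then 1 else 0)) /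
          Real.sqrt (((t : ℝ) + N) * ((T : ℝ) + N - t - 1)) := by
  intro x y hx hy
  simp only [fOrth_eq_hahnOrth S T _ _ _ hN (by omega : t + S ≤ T),
    fOrth_eq_hahnOrth S T _ _ _ hN htT, wgt_eq_hahnWeight,
    show T - t - S = T - (t + 1) - S + 1 by omega, show t + 1 + N - 1 = t + N - 1 + 1 by omega]
  set s := S + N - 1 with hs
  set c := T - (t + 1) - S with hc
  set m := t + N - 1 with hm
  have hsR : (s : ℝ) = S + N - 1 := by rw [hs, Nat.cast_sub (by omega)]; push_cast; ring
  have hcR : (c : ℝ) = T - t - 1 - S := by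
    rw [hc, Nat.cast_sub (by omega), Nat.cast_sub (by omega)]; push_cast; ring
  have hmR : (m : ℝ) = t + N - 1 := by rw [hm, Nat.cast_sub (by omega)]; push_cast; ring
  rw [show t + N = m + 1 by omega, show (t : ℝ) + N = m + 1 by rw [hmR]; ring,
    show (T : ℝ) + N - t - 1 = s + c + 1 by rw [hsR, hcR]; ring,
    show (S : ℝ) + N - 1 - x = s - x by rw [hsR],
    show (T : ℝ) - t - S + x = c + 1 + x by rw [hcR]; ring]
  exact sum_sqrt_mul_hahnOrth_mul_hahnOrth c hx (by omega) (by omega)
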